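/- All eigenvalues of the matrix A = [[0, -iω_x, -iω_y], [-iω_x, -μ, 0], [-iω_y, 0, -μ]], with μ := c_D + c_V(ω_x² + ω_y²) ≥ 0 and ω_x, ω_y real, have nonpositive real part. -/
import Mathlib


open Complex Matrix

/-- All eigenvalues of the damped linear wave matrix have nonpositive real part. -/
theorem wave_mode_eigenvalues_re_nonpos (cD cV ωx ωy : ℝ) (hcD : 0 ≤ cD) (hcV : 0 ≤ cV)
    (μ : ℝ) (hμ : μ = cD + cV * (ωx ^ 2 + ωy ^ 2))
    (A : Matrix (Fin 3) (Fin 3) ℂ)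
    (hA : A = !![0, -I * ωx, -I * ωy;
                 -I * ωx, -(μ : ℂ), 0;
                 -I * ωy, 0, -(μ : ℂ)]) :
    ∀ lam : ℂ, Module.End.HasEigenvalue (Matrix.toLin' A) lam → lam.re ≤ 0 := by
  intro lam hlam
  obtain ⟨v, hv, hv0⟩ := hlam.exists_hasEigenvector
  have hmv : A.mulVec v = lam • v := by
    have := hv
    simpa [Matrix.toLin'_apply] using this
  set a := v 0 with ha
  set b := v 1 with hb
  set c := v 2 with hc
  have e0 : -I * ωx * b + -I * ωy * c = lam * a := by
    have := congrFun hmv 0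
    simpa [hA, Matrix.mulVec, dotProduct, Fin.sum_univ_three, ha, hb, hc] using this
  have e1 : -I * ωx * a + -(μ : ℂ) * b = lam * b := by
    have := congrFun hmv 1
    simpa [hA, Matrix.mulVec, dotProduct, Fin.sum_univ_three, ha, hb, hc] using this
  have e2 : -I * ωy * a + -(μ : ℂ) * c = lam * c := by
    have := congrFun hmv 2
    simpa [hA, Matrix.mulVec, dotProduct, Fin.sum_univ_three, ha, hb, hc] using this
  have key : lam * ((starRingEnd ℂ) a * a + (starRingEnd ℂ) b * b + (starRingEnd ℂ) c * c)
      = (starRingEnd ℂ) a * (-I * ωx * b + -I * ωy * c)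
        + (starRingEnd ℂ) b * (-I * ωx * a + -(μ : ℂ) * b)
        + (starRingEnd ℂ) c * (-I * ωy * a + -(μ : ℂ) * c) := by
    rw [e0, e1, e2]; ring
  have hre := congrArg Complex.re key
  simp only [Complex.mul_re, Complex.mul_im, Complex.add_re, Complex.add_im,
    Complex.neg_re, Complex.neg_im, Complex.I_re, Complex.I_im,
    Complex.ofReal_re, Complex.ofReal_im, Complex.conj_re, Complex.conj_im] at hre
  have hre' : lam.re * (Complex.normSq a + Complex.normSq b + Complex.normSq c)
      = -μ * (Complex.normSq b + Complex.normSq c) := by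
    simp only [Complex.normSq_apply]
    linear_combination hre
  have hN : 0 < Complex.normSq a + Complex.normSq b + Complex.normSq c := by
    rcases Function.ne_iff.mp hv0 with ⟨i, hi⟩
    have hpos : 0 < Complex.normSq (v i) := Complex.normSq_pos.mpr hi
    have habc : v i = a ∨ v i = b ∨ v i = c := by
      fin_cases i
      · exact Or.inl rfl
      · exact Or.inr (Or.inl rfl)
      · exact Or.inr (Or.inr rfl)
    rcases habc with h | h | h <;> rw [h] at hpos <;>
      nlinarith [Complex.normSq_nonneg a, Complex.normSq_nonneg b, Complex.normSq_nonneg c]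
  have hμ0 : 0 ≤ μ := by nlinarith [sq_nonneg ωx, sq_nonneg ωy]
  nlinarith [Complex.normSq_nonneg b, Complex.normSq_nonneg c]
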